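/- A point p = (x1,x2,x3,y1,y2,y3) ∈ ℝ^6 is an equilibrium of the so(4) free rigid body system (i.e., all six right-hand sides vanish at p) if and only if p belongs to t1 ∪ t2 ∪ t3 ∪ s+ ∪ s−, where t1 = {x2=x3=y2=y3=0}, t2 = {x1=x3=y1=y3=0}, t3 = {x1=x2=y1=y2=0}, and s± = {(λ2+λ3)y1 = ±(λ1+λ4)x1, (λ1+λ3)y2 = ±(λ2+λ4)x2, (λ1+λ2)y3 = ±(λ3+λ4)x3} (the same sign ± in all three equations). -/
import Mathlib

noncomputable section

/-- The right-hand side of the so(4) free rigid body system on ℝ⁶,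
coordinates `(x1,x2,x3,y1,y2,y3) = (p 0, p 1, p 2, p 3, p 4, p 5)`. -/
def vf (l1 l2 l3 l4 : ℝ) (p : Fin 6 → ℝ) : Fin 6 → ℝ :=
  ![(1/(l1+l2) - 1/(l1+l3)) * (p 1 * p 2) + (1/(l3+l4) - 1/(l2+l4)) * (p 4 * p 5),
    (1/(l2+l3) - 1/(l1+l2)) * (p 0 * p 2) + (1/(l1+l4) - 1/(l3+l4)) * (p 3 * p 5),
    (1/(l1+l3) - 1/(l2+l3)) * (p 0 * p 1) + (1/(l2+l4) - 1/(l1+l4)) * (p 3 * p 4),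
    (1/(l3+l4) - 1/(l1+l3)) * (p 1 * p 5) + (1/(l1+l2) - 1/(l2+l4)) * (p 2 * p 4),
    (1/(l2+l3) - 1/(l3+l4)) * (p 0 * p 5) + (1/(l1+l4) - 1/(l1+l2)) * (p 2 * p 3),
    (1/(l2+l4) - 1/(l2+l3)) * (p 0 * p 4) + (1/(l1+l3) - 1/(l1+l4)) * (p 1 * p 3)]

/-- Lyapunov stability of an equilibrium `e` of the so(4) free rigid body system:
for every ε > 0 there is δ > 0 such that every differentiable solution starting
δ-close to `e` stays ε-close to `e` for all t ≥ 0. -/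
def IsLyapunovStable (l1 l2 l3 l4 : ℝ) (e : Fin 6 → ℝ) : Prop :=
  ∀ ε > 0, ∃ δ > 0, ∀ f : ℝ → (Fin 6 → ℝ),
    (∀ t : ℝ, HasDerivAt f (vf l1 l2 l3 l4 (f t)) t) →
    ‖f 0 - e‖ < δ → ∀ t ≥ 0, ‖f t - e‖ < ε

/-- Determinant-style lemma: if `(u,v) ≠ (0,0)` satisfies the two bilinear
relations, then the "eigenvalue" relation `(m t)² = (n s)²` holds. -/
lemma aux_sq (P Q R S k m n u v s t : ℝ)
    (hz : ¬ (u = 0 ∧ v = 0)) (hP : P ≠ 0) (hQ : Q ≠ 0) (hR : R ≠ 0) (hS : S ≠ 0) (hk : k ≠ 0)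
    (e1 : P*(v*t) = Q*(u*s)) (e2 : R*(u*t) = S*(s*v))
    (hm : P*R = k*(m*m)) (hn : Q*S = k*(n*n)) :
    (m*t - n*s) * (m*t + n*s) = 0 := by
  by_cases hu : u = 0
  · have hv : v ≠ 0 := fun hv => hz ⟨hu, hv⟩
    have ht : t = 0 := by
      have h' : P * (v*t) = 0 := by rw [e1, hu]; ring
      have h'' := (mul_eq_zero.mp h').resolve_left hP
      exact (mul_eq_zero.mp h'').resolve_left hv
    have hs : s = 0 := by
      have h' : S * (s*v) = 0 := by rw [← e2, hu]; ring
      have h'' := (mul_eq_zero.mp h').resolve_left hS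
      rcases mul_eq_zero.mp h'' with h | h
      · exact h
      · exact absurd h hv
    rw [ht, hs]; ring
  · by_cases hv : v = 0
    · have hs : s = 0 := by
        have h' : Q * (u*s) = 0 := by rw [← e1, hv]; ring
        have h'' := (mul_eq_zero.mp h').resolve_left hQ
        exact (mul_eq_zero.mp h'').resolve_left hu
      have ht : t = 0 := by
        have h' : R * (u*t) = 0 := by rw [e2, hv, hs]; ring
        have h'' := (mul_eq_zero.mp h').resolve_left hR
        exact (mul_eq_zero.mp h'').resolve_left hu
      rw [ht, hs]; ring
    · have key : (u*v) * (k * ((m*t - n*s)*(m*t + n*s))) = 0 := by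
        linear_combination (R*u*t)*e1 + (Q*u*s)*e2 - (u*v*t*t)*hm + (u*v*s*s)*hn
      have h1 := (mul_eq_zero.mp key).resolve_left (mul_ne_zero hu hv)
      exact (mul_eq_zero.mp h1).resolve_left hk

/-- Sign-consistency lemma: mismatched signs force `xi * xj = 0`. -/
lemma aux_sign (K1 K2 M N M' N' xi yi xj yj : ℝ)
    (hK2 : K2 ≠ 0) (hM : M ≠ 0) (hM' : M' ≠ 0)
    (e : K1*(yi*yj) = K2*(xi*xj))
    (di : M*yi - N*xi = 0) (dj : M'*yj + N'*xj = 0)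
    (hc : K1*(N*N') = K2*(M*M')) :
    xi * xj = 0 := by
  have key : (K2*(M*M')) * (2*(xi*xj)) = 0 := by
    linear_combination (-(M*M'))*e + (K1*M'*yj)*di + (K1*N*xi)*dj + (-(xi*xj))*hc
  have h1 := (mul_eq_zero.mp key).resolve_left (mul_ne_zero hK2 (mul_ne_zero hM hM'))
  linarith

lemma x_ne (M N x y : ℝ) (hM : M ≠ 0) (hz : ¬(x = 0 ∧ y = 0)) (d : M*y - N*x = 0) :
    x ≠ 0 := by
  intro hx
  apply hz
  refine ⟨hx, ?_⟩
  have hMy : M * y = 0 := by rw [hx] at d; linear_combination d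
  exact (mul_eq_zero.mp hMy).resolve_left hM

lemma y_zero (M N x y : ℝ) (hM : M ≠ 0) (d : M*y - N*x = 0) (hx : x = 0) : y = 0 := by
  have hMy : M * y = 0 := by rw [hx] at d; linear_combination d
  exact (mul_eq_zero.mp hMy).resolve_left hM

lemma vf_zero_of (l1 l2 l3 l4 : ℝ) (p : Fin 6 → ℝ)
    (c0 : (1/(l1+l2) - 1/(l1+l3)) * (p 1 * p 2) + (1/(l3+l4) - 1/(l2+l4)) * (p 4 * p 5) = 0)
    (c1 : (1/(l2+l3) - 1/(l1+l2)) * (p 0 * p 2) + (1/(l1+l4) - 1/(l3+l4)) * (p 3 * p 5) = 0)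
    (c2 : (1/(l1+l3) - 1/(l2+l3)) * (p 0 * p 1) + (1/(l2+l4) - 1/(l1+l4)) * (p 3 * p 4) = 0)
    (c3 : (1/(l3+l4) - 1/(l1+l3)) * (p 1 * p 5) + (1/(l1+l2) - 1/(l2+l4)) * (p 2 * p 4) = 0)
    (c4 : (1/(l2+l3) - 1/(l3+l4)) * (p 0 * p 5) + (1/(l1+l4) - 1/(l1+l2)) * (p 2 * p 3) = 0)
    (c5 : (1/(l2+l4) - 1/(l2+l3)) * (p 0 * p 4) + (1/(l1+l3) - 1/(l1+l4)) * (p 1 * p 3) = 0) :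
    vf l1 l2 l3 l4 p = 0 := by
  funext i
  fin_cases i
  exacts [c0, c1, c2, c3, c4, c5]

set_option maxHeartbeats 2000000 in
/-- a point is an equilibrium of the so(4) free rigid body system
iff it lies in `t1 ∪ t2 ∪ t3 ∪ s₊ ∪ s₋`. -/
theorem so4_equilibrium_characterization
    (l1 l2 l3 l4 : ℝ) (h12 : l2 < l1) (h23 : l3 < l2) (h34 : l4 < l3)
    (s12 : 0 < l1 + l2) (s13 : 0 < l1 + l3) (s14 : 0 < l1 + l4)
    (s23 : 0 < l2 + l3) (s24 : 0 < l2 + l4) (s34 : 0 < l3 + l4)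
    (p : Fin 6 → ℝ) :
    vf l1 l2 l3 l4 p = 0 ↔
      (p 1 = 0 ∧ p 2 = 0 ∧ p 4 = 0 ∧ p 5 = 0) ∨
      (p 0 = 0 ∧ p 2 = 0 ∧ p 3 = 0 ∧ p 5 = 0) ∨
      (p 0 = 0 ∧ p 1 = 0 ∧ p 3 = 0 ∧ p 4 = 0) ∨
      ((l2 + l3) * p 3 = (l1 + l4) * p 0 ∧ (l1 + l3) * p 4 = (l2 + l4) * p 1 ∧
        (l1 + l2) * p 5 = (l3 + l4) * p 2) ∨
      ((l2 + l3) * p 3 = -((l1 + l4) * p 0) ∧ (l1 + l3) * p 4 = -((l2 + l4) * p 1) ∧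
        (l1 + l2) * p 5 = -((l3 + l4) * p 2)) := by
  have nA : l1 + l2 ≠ 0 := ne_of_gt s12
  have nB : l1 + l3 ≠ 0 := ne_of_gt s13
  have nC : l1 + l4 ≠ 0 := ne_of_gt s14
  have nD : l2 + l3 ≠ 0 := ne_of_gt s23
  have nE : l2 + l4 ≠ 0 := ne_of_gt s24
  have nF : l3 + l4 ≠ 0 := ne_of_gt s34
  have g12 : l1 - l2 ≠ 0 := sub_ne_zero.mpr (ne_of_gt h12)
  have g13 : l1 - l3 ≠ 0 := sub_ne_zero.mpr (ne_of_gt (lt_trans h23 h12))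
  have g14 : l1 - l4 ≠ 0 := sub_ne_zero.mpr (ne_of_gt (lt_trans h34 (lt_trans h23 h12)))
  have g23 : l2 - l3 ≠ 0 := sub_ne_zero.mpr (ne_of_gt h23)
  have g24 : l2 - l4 ≠ 0 := sub_ne_zero.mpr (ne_of_gt (lt_trans h34 h23))
  have g34 : l3 - l4 ≠ 0 := sub_ne_zero.mpr (ne_of_gt h34)
  constructor
  · intro h
    have h0 : (1/(l1+l2) - 1/(l1+l3)) * (p 1 * p 2) + (1/(l3+l4) - 1/(l2+l4)) * (p 4 * p 5) = 0 :=
      congrFun h 0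
    have h1 : (1/(l2+l3) - 1/(l1+l2)) * (p 0 * p 2) + (1/(l1+l4) - 1/(l3+l4)) * (p 3 * p 5) = 0 :=
      congrFun h 1
    have h2 : (1/(l1+l3) - 1/(l2+l3)) * (p 0 * p 1) + (1/(l2+l4) - 1/(l1+l4)) * (p 3 * p 4) = 0 :=
      congrFun h 2
    have h3 : (1/(l3+l4) - 1/(l1+l3)) * (p 1 * p 5) + (1/(l1+l2) - 1/(l2+l4)) * (p 2 * p 4) = 0 :=
      congrFun h 3
    have h4 : (1/(l2+l3) - 1/(l3+l4)) * (p 0 * p 5) + (1/(l1+l4) - 1/(l1+l2)) * (p 2 * p 3) = 0 :=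
      congrFun h 4
    have h5 : (1/(l2+l4) - 1/(l2+l3)) * (p 0 * p 4) + (1/(l1+l3) - 1/(l1+l4)) * (p 1 * p 3) = 0 :=
      congrFun h 5
    field_simp at h0 h1 h2 h3 h4 h5
    set x1 := p 0 with hX1
    set x2 := p 1 with hX2
    set x3 := p 2 with hX3
    set y1 := p 3 with hY1
    set y2 := p 4 with hY2
    set y3 := p 5 with hY3
    set A := l1 + l2 with hsA
    set B := l1 + l3 with hsB
    set C := l1 + l4 with hsC
    set D := l2 + l3 with hsD
    set E := l2 + l4 with hsE
    set F := l3 + l4 with hsF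
    have eq1 : A*B*(y2*y3) = E*F*(x2*x3) := by
      have key : (l2 - l3) * (A*B*(y2*y3) - E*F*(x2*x3)) = 0 := by
        rw [hsA, hsB, hsE, hsF]; linear_combination h0
      have := (mul_eq_zero.mp key).resolve_left g23
      linarith
    have eq2 : C*F*(x1*x3) = A*D*(y1*y3) := by
      have key : (l1 - l3) * (C*F*(x1*x3) - A*D*(y1*y3)) = 0 := by
        rw [hsA, hsC, hsD, hsF]; linear_combination h1
      have := (mul_eq_zero.mp key).resolve_left g13
      linarith
    have eq3 : B*D*(y1*y2) = C*E*(x1*x2) := by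
      have key : (l1 - l2) * (B*D*(y1*y2) - C*E*(x1*x2)) = 0 := by
        rw [hsB, hsC, hsD, hsE]; linear_combination h2
      have := (mul_eq_zero.mp key).resolve_left g12
      linarith
    have eq4 : A*E*(x2*y3) = B*F*(x3*y2) := by
      have key : (l1 - l4) * (A*E*(x2*y3) - B*F*(x3*y2)) = 0 := by
        rw [hsA, hsB, hsE, hsF]; linear_combination h3
      have := (mul_eq_zero.mp key).resolve_left g14
      linarith
    have eq5 : A*C*(x1*y3) = D*F*(x3*y1) := by
      have key : (l2 - l4) * (A*C*(x1*y3) - D*F*(x3*y1)) = 0 := by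
        rw [hsA, hsC, hsD, hsF]; linear_combination -h4
      have := (mul_eq_zero.mp key).resolve_left g24
      linarith
    have eq6 : B*C*(x1*y2) = D*E*(x2*y1) := by
      have key : (l3 - l4) * (B*C*(x1*y2) - D*E*(x2*y1)) = 0 := by
        rw [hsB, hsC, hsD, hsE]; linear_combination h5
      have := (mul_eq_zero.mp key).resolve_left g34
      linarith
    clear h0 h1 h2 h3 h4 h5 h
    by_cases hz1 : x1 = 0 ∧ y1 = 0
    · by_cases hz2 : x2 = 0 ∧ y2 = 0
      · exact Or.inr (Or.inr (Or.inl ⟨hz1.1, hz2.1, hz1.2, hz2.2⟩))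
      · by_cases hz3 : x3 = 0 ∧ y3 = 0
        · exact Or.inr (Or.inl ⟨hz1.1, hz3.1, hz1.2, hz3.2⟩)
        · -- z1 = 0, z2 ≠ 0, z3 ≠ 0
          have r2 : (B*y2 - E*x2) * (B*y2 + E*x2) = 0 :=
            aux_sq (A*B) (E*F) (B*F) (A*E) (A*F) B E x3 y3 x2 y2 hz3
              (mul_ne_zero nA nB) (mul_ne_zero nE nF) (mul_ne_zero nB nF)
              (mul_ne_zero nA nE) (mul_ne_zero nA nF)
              (by linear_combination eq1) eq4.symm (by ring) (by ring)
          have r3 : (A*y3 - F*x3) * (A*y3 + F*x3) = 0 :=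
            aux_sq (A*B) (E*F) (A*E) (B*F) (B*E) A F x2 y2 x3 y3 hz2
              (mul_ne_zero nA nB) (mul_ne_zero nE nF) (mul_ne_zero nA nE)
              (mul_ne_zero nB nF) (mul_ne_zero nB nE)
              eq1 eq4 (by ring) (by ring)
          rcases mul_eq_zero.mp r2 with d2 | d2 <;> rcases mul_eq_zero.mp r3 with d3 | d3
          · exact Or.inr (Or.inr (Or.inr (Or.inl
              ⟨by rw [hz1.1, hz1.2]; ring, by linarith, by linarith⟩)))
          · -- d2 : B*y2 - E*x2 = 0, d3 : A*y3 + F*x3 = 0 : mismatch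
            have h23' : x2 * x3 = 0 :=
              aux_sign (A*B) (E*F) B E A F x2 y2 x3 y3 (mul_ne_zero nE nF) nB nA
                eq1 d2 d3 (by ring)
            rcases mul_eq_zero.mp h23' with hx | hx
            · exact absurd hx (x_ne B E x2 y2 nB hz2 d2)
            · exact absurd hx (x_ne A (-F) x3 y3 nA hz3 (by linear_combination d3))
          · -- d2 : B*y2 + E*x2 = 0, d3 : A*y3 - F*x3 = 0 : mismatch
            have h23' : x3 * x2 = 0 :=
              aux_sign (A*B) (E*F) A F B E x3 y3 x2 y2 (mul_ne_zero nE nF) nA nB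
                (by linear_combination eq1) d3 d2 (by ring)
            rcases mul_eq_zero.mp h23' with hx | hx
            · exact absurd hx (x_ne A F x3 y3 nA hz3 d3)
            · exact absurd hx (x_ne B (-E) x2 y2 nB hz2 (by linear_combination d2))
          · exact Or.inr (Or.inr (Or.inr (Or.inr
              ⟨by rw [hz1.1, hz1.2]; ring, by linarith, by linarith⟩)))
    · by_cases hz2 : x2 = 0 ∧ y2 = 0
      · by_cases hz3 : x3 = 0 ∧ y3 = 0
        · exact Or.inl ⟨hz2.1, hz3.1, hz2.2, hz3.2⟩
        · -- z1 ≠ 0, z2 = 0, z3 ≠ 0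
          have r1 : (D*y1 - C*x1) * (D*y1 + C*x1) = 0 :=
            aux_sq (A*D) (C*F) (D*F) (A*C) (A*F) D C x3 y3 x1 y1 hz3
              (mul_ne_zero nA nD) (mul_ne_zero nC nF) (mul_ne_zero nD nF)
              (mul_ne_zero nA nC) (mul_ne_zero nA nF)
              (by linear_combination -eq2) eq5.symm (by ring) (by ring)
          have r3 : (A*y3 - F*x3) * (A*y3 + F*x3) = 0 :=
            aux_sq (A*D) (C*F) (A*C) (D*F) (C*D) A F x1 y1 x3 y3 hz1
              (mul_ne_zero nA nD) (mul_ne_zero nC nF) (mul_ne_zero nA nC)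
              (mul_ne_zero nD nF) (mul_ne_zero nC nD)
              (by linear_combination -eq2) eq5 (by ring) (by ring)
          rcases mul_eq_zero.mp r1 with d1 | d1 <;> rcases mul_eq_zero.mp r3 with d3 | d3
          · exact Or.inr (Or.inr (Or.inr (Or.inl
              ⟨by linarith, by rw [hz2.1, hz2.2]; ring, by linarith⟩)))
          · have h13' : x1 * x3 = 0 :=
              aux_sign (A*D) (C*F) D C A F x1 y1 x3 y3 (mul_ne_zero nC nF) nD nA
                (by linear_combination -eq2) d1 d3 (by ring)
            rcases mul_eq_zero.mp h13' with hx | hx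
            · exact absurd hx (x_ne D C x1 y1 nD hz1 d1)
            · exact absurd hx (x_ne A (-F) x3 y3 nA hz3 (by linear_combination d3))
          · have h13' : x3 * x1 = 0 :=
              aux_sign (A*D) (C*F) A F D C x3 y3 x1 y1 (mul_ne_zero nC nF) nA nD
                (by linear_combination -eq2) d3 d1 (by ring)
            rcases mul_eq_zero.mp h13' with hx | hx
            · exact absurd hx (x_ne A F x3 y3 nA hz3 d3)
            · exact absurd hx (x_ne D (-C) x1 y1 nD hz1 (by linear_combination d1))
          · exact Or.inr (Or.inr (Or.inr (Or.inr
              ⟨by linarith, by rw [hz2.1, hz2.2]; ring, by linarith⟩)))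
      · -- z1 ≠ 0, z2 ≠ 0
        have r1 : (D*y1 - C*x1) * (D*y1 + C*x1) = 0 :=
          aux_sq (B*D) (C*E) (D*E) (B*C) (B*E) D C x2 y2 x1 y1 hz2
            (mul_ne_zero nB nD) (mul_ne_zero nC nE) (mul_ne_zero nD nE)
            (mul_ne_zero nB nC) (mul_ne_zero nB nE)
            (by linear_combination eq3) eq6.symm (by ring) (by ring)
        have r2 : (B*y2 - E*x2) * (B*y2 + E*x2) = 0 :=
          aux_sq (B*D) (C*E) (B*C) (D*E) (C*D) B E x1 y1 x2 y2 hz1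
            (mul_ne_zero nB nD) (mul_ne_zero nC nE) (mul_ne_zero nB nC)
            (mul_ne_zero nD nE) (mul_ne_zero nC nD)
            eq3 eq6 (by ring) (by ring)
        have r3 : (A*y3 - F*x3) * (A*y3 + F*x3) = 0 :=
          aux_sq (A*B) (E*F) (A*E) (B*F) (B*E) A F x2 y2 x3 y3 hz2
            (mul_ne_zero nA nB) (mul_ne_zero nE nF) (mul_ne_zero nA nE)
            (mul_ne_zero nB nF) (mul_ne_zero nB nE)
            eq1 eq4 (by ring) (by ring)
        rcases mul_eq_zero.mp r1 with d1 | d1 <;> rcases mul_eq_zero.mp r2 with d2 | d2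
        · -- both +
          rcases mul_eq_zero.mp r3 with d3 | d3
          · exact Or.inr (Or.inr (Or.inr (Or.inl ⟨by linarith, by linarith, by linarith⟩)))
          · have h13' : x1 * x3 = 0 :=
              aux_sign (A*D) (C*F) D C A F x1 y1 x3 y3 (mul_ne_zero nC nF) nD nA
                (by linear_combination -eq2) d1 d3 (by ring)
            rcases mul_eq_zero.mp h13' with hx | hx
            · exact absurd hx (x_ne D C x1 y1 nD hz1 d1)
            · have hy3 : y3 = 0 := y_zero A (-F) x3 y3 nA (by linear_combination d3) hx
              exact Or.inr (Or.inr (Or.inr (Or.inl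
                ⟨by linarith, by linarith, by rw [hx, hy3]; ring⟩)))
        · -- d1 : -, d2 : + : mismatch on pair (1,2)
          have h12' : x1 * x2 = 0 :=
            aux_sign (B*D) (C*E) D C B E x1 y1 x2 y2 (mul_ne_zero nC nE) nD nB
              eq3 d1 d2 (by ring)
          rcases mul_eq_zero.mp h12' with hx | hx
          · exact absurd hx (x_ne D C x1 y1 nD hz1 d1)
          · exact absurd hx (x_ne B (-E) x2 y2 nB hz2 (by linear_combination d2))
        · -- d1 : +, d2 : - : mismatch
          have h12' : x2 * x1 = 0 :=
            aux_sign (B*D) (C*E) B E D C x2 y2 x1 y1 (mul_ne_zero nC nE) nB nD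
              (by linear_combination eq3) d2 d1 (by ring)
          rcases mul_eq_zero.mp h12' with hx | hx
          · exact absurd hx (x_ne B E x2 y2 nB hz2 d2)
          · exact absurd hx (x_ne D (-C) x1 y1 nD hz1 (by linear_combination d1))
        · -- both -
          rcases mul_eq_zero.mp r3 with d3 | d3
          · have h13' : x3 * x1 = 0 :=
              aux_sign (A*D) (C*F) A F D C x3 y3 x1 y1 (mul_ne_zero nC nF) nA nD
                (by linear_combination -eq2) d3 d1 (by ring)
            rcases mul_eq_zero.mp h13' with hx | hx
            · have hy3 : y3 = 0 := y_zero A F x3 y3 nA d3 hx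
              exact Or.inr (Or.inr (Or.inr (Or.inr
                ⟨by linarith, by linarith, by rw [hx, hy3]; ring⟩)))
            · exact absurd hx (x_ne D (-C) x1 y1 nD hz1 (by linear_combination d1))
          · exact Or.inr (Or.inr (Or.inr (Or.inr ⟨by linarith, by linarith, by linarith⟩)))
  · intro h
    rcases h with ⟨e1, e2, e3, e4⟩ | ⟨e1, e2, e3, e4⟩ | ⟨e1, e2, e3, e4⟩ | ⟨d1, d2, d3⟩ | ⟨d1, d2, d3⟩
    · refine vf_zero_of l1 l2 l3 l4 p ?_ ?_ ?_ ?_ ?_ ?_ <;> simp [e1, e2, e3, e4]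
    · refine vf_zero_of l1 l2 l3 l4 p ?_ ?_ ?_ ?_ ?_ ?_ <;> simp [e1, e2, e3, e4]
    · refine vf_zero_of l1 l2 l3 l4 p ?_ ?_ ?_ ?_ ?_ ?_ <;> simp [e1, e2, e3, e4]
    · have hy1 : p 3 = ((l1+l4)/(l2+l3)) * p 0 := by
        field_simp; linear_combination d1
      have hy2 : p 4 = ((l2+l4)/(l1+l3)) * p 1 := by
        field_simp; linear_combination d2
      have hy3 : p 5 = ((l3+l4)/(l1+l2)) * p 2 := by
        field_simp; linear_combination d3
      refine vf_zero_of l1 l2 l3 l4 p ?_ ?_ ?_ ?_ ?_ ?_ <;>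
        (simp only [hy1, hy2, hy3]; field_simp; ring)
    · have hy1 : p 3 = -(((l1+l4)/(l2+l3)) * p 0) := by
        field_simp; linear_combination d1
      have hy2 : p 4 = -(((l2+l4)/(l1+l3)) * p 1) := by
        field_simp; linear_combination d2
      have hy3 : p 5 = -(((l3+l4)/(l1+l2)) * p 2) := by
        field_simp; linear_combination d3
      refine vf_zero_of l1 l2 l3 l4 p ?_ ?_ ?_ ?_ ?_ ?_ <;>
        (simp only [hy1, hy2, hy3]; field_simp; ring)
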